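/- arXiv:1805.00512 — 5 statements merged into one kernel-verified Lean document; each statement's English description precedes it below -/
import Mathlib

section
/- If a cone C is sequentially complete (every non-decreasing sequence in the unit ball has a least upper bound in the unit ball), then every non-increasing sequence (xₙ) in C has a greatest lower bound. -/
/-!
Write `x₀ = xₙ + yₙ`. The complements `yₙ` increase and are bounded by `x₀`, so after scaling
them into the unit ball they have a supremum `s`. Since `x₀` bounds the `yₙ`, `x₀ = s + t`, and
`t` is the infimum of the `xₙ`: by cancellation, `z ↦ x₀ - z` reverses the order on `[0, x₀]`.
-/

class PCone (C : Type*) extends AddCommMonoid C, Module NNReal C where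
  cnorm : C → NNReal
  add_left_cancel' : ∀ x y y' : C, x + y = x + y' → y = y'
  cnorm_smul : ∀ (a : NNReal) (x : C), cnorm (a • x) = a * cnorm x
  cnorm_add_le : ∀ x y : C, cnorm (x + y) ≤ cnorm x + cnorm y
  cnorm_eq_zero : ∀ x : C, cnorm x = 0 → x = 0
  cnorm_le_add : ∀ x y : C, cnorm x ≤ cnorm (x + y)

/-- The cone order: `x ≤ y` iff `y = x + z` for some `z`. -/
def cle {C : Type*} [PCone C] (x y : C) : Prop := ∃ z : C, y = x + z

/-- `b` is an upper bound of `s` for the cone order. -/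
def IsUBc {C : Type*} [PCone C] (s : Set C) (b : C) : Prop := ∀ a ∈ s, cle a b

/-- `j` is a least upper bound of `s` for the cone order. -/
def IsLUBc {C : Type*} [PCone C] (s : Set C) (j : C) : Prop :=
  IsUBc s j ∧ ∀ b, IsUBc s b → cle j b

/-- `b` is a lower bound of `s` for the cone order. -/
def IsLBc {C : Type*} [PCone C] (s : Set C) (b : C) : Prop := ∀ a ∈ s, cle b a

/-- `g` is a greatest lower bound of `s` for the cone order. -/
def IsGLBc {C : Type*} [PCone C] (s : Set C) (g : C) : Prop :=
  IsLBc s g ∧ ∀ b, IsLBc s b → cle b g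

/-- `D` is directed for the cone order. -/
def DirC {C : Type*} [PCone C] (D : Set C) : Prop :=
  D.Nonempty ∧ ∀ x ∈ D, ∀ y ∈ D, ∃ z ∈ D, cle x z ∧ cle y z

/-- `D` is directed for the reverse cone order. -/
def RevDirC {C : Type*} [PCone C] (D : Set C) : Prop :=
  D.Nonempty ∧ ∀ x ∈ D, ∀ y ∈ D, ∃ z ∈ D, cle z x ∧ cle z y

open Set NNReal

namespace PCone

variable {C : Type*} [PCone C]

instance : IsLeftCancelAdd C := ⟨PCone.add_left_cancel'⟩

theorem cle_trans {x y z : C} : cle x y → cle y z → cle x z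
  | ⟨a, ha⟩, ⟨b, hb⟩ => ⟨a + b, by rw [hb, ha, add_assoc]⟩

theorem cle_smul {x y : C} (a : ℝ≥0) : cle x y → cle (a • x) (a • y)
  | ⟨z, hz⟩ => ⟨a • z, by rw [hz, smul_add]⟩

theorem cnorm_le_of_cle {x y : C} : cle x y → cnorm x ≤ cnorm y
  | ⟨z, hz⟩ => hz ▸ cnorm_le_add x z

theorem cle_of_add_eq_add {x x' y y' : C} (hx : cle x' x) (h : x + y = x' + y') : cle y y' := by
  obtain ⟨z, rfl⟩ := hx
  exact ⟨z, add_left_cancel (a := x') (by rw [← h]; ac_rfl)⟩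

theorem cle_apply_zero_of_forall_succ_cle {x : ℕ → C} (hx : ∀ n, cle (x (n + 1)) (x n)) :
    ∀ n, cle (x n) (x 0)
  | 0 => ⟨0, (add_zero _).symm⟩
  | n + 1 => cle_trans (hx n) (cle_apply_zero_of_forall_succ_cle hx n)

theorem cnorm_inv_one_add_cnorm_smul_le_one {y c : C} (h : cle y c) :
    cnorm ((1 + cnorm c)⁻¹ • y) ≤ 1 := by
  rw [cnorm_smul, inv_mul_le_one₀ (by positivity)]
  exact (cnorm_le_of_cle h).trans (le_add_of_nonneg_left zero_le_one)

theorem IsLUBc.range_smul {ι : Type*} {y : ι → C} {s : C} (hs : IsLUBc (range y) s) {a : ℝ≥0}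
    (ha : a ≠ 0) : IsLUBc (range fun i => a • y i) (a • s) := by
  refine ⟨?_, fun b hb => ?_⟩
  · rintro _ ⟨i, rfl⟩
    exact cle_smul a (hs.1 _ ⟨i, rfl⟩)
  · have hub : IsUBc (range y) (a⁻¹ • b) := by
      rintro _ ⟨i, rfl⟩
      simpa [smul_smul, inv_mul_cancel₀ ha] using cle_smul a⁻¹ (hb _ ⟨i, rfl⟩)
    simpa [smul_smul, mul_inv_cancel₀ ha] using cle_smul a (hs.2 _ hub)

theorem isGLBc_range_of_isLUBc_complement {ι : Type*} [Nonempty ι] {x y : ι → C} {c s t : C}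
    (hc : ∀ i, c = x i + y i) (hs : IsLUBc (range y) s) (hst : c = s + t) :
    IsGLBc (range x) t := by
  refine ⟨?_, fun b hb => ?_⟩
  · rintro _ ⟨i, rfl⟩
    obtain ⟨u, hu⟩ := hs.1 _ ⟨i, rfl⟩
    exact ⟨u, add_left_cancel (a := y i) (by rw [add_comm, ← hc, hst, hu]; ac_rfl)⟩
  · obtain ⟨i⟩ := ‹Nonempty ι›
    obtain ⟨v, hv⟩ := cle_trans (hb _ ⟨i, rfl⟩) ⟨y i, hc i⟩
    have hub : IsUBc (range y) v := by
      rintro _ ⟨j, rfl⟩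
      obtain ⟨z, hz⟩ := hb _ ⟨j, rfl⟩
      exact ⟨z, add_left_cancel (a := b) (by rw [← hv, hc j, hz]; ac_rfl)⟩
    obtain ⟨r, hr⟩ := hs.2 v hub
    exact ⟨r, add_left_cancel (a := s) (by rw [← hst, hv, hr]; ac_rfl)⟩

end PCone

open PCone

/-- If a cone is sequentially complete (every non-decreasing sequence in the unit
ball has a least upper bound in the unit ball), then every non-increasing sequence
has a greatest lower bound. -/
theorem seq_complete_has_infs {C : Type*} [PCone C]
    (hsc : ∀ x : ℕ → C, (∀ n, cle (x n) (x (n + 1))) →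
      (∀ n, PCone.cnorm (x n) ≤ 1) →
      ∃ s : C, PCone.cnorm s ≤ 1 ∧ IsLUBc (Set.range x) s) :
    ∀ x : ℕ → C, (∀ n, cle (x (n + 1)) (x n)) →
      ∃ g : C, IsGLBc (Set.range x) g := by
  intro x hx
  choose y hy using cle_apply_zero_of_forall_succ_cle hx
  have hy_le : ∀ n, cle (y n) (x 0) := fun n => ⟨x n, by rw [hy n, add_comm]⟩
  have hy_mono : ∀ n, cle (y n) (y (n + 1)) :=
    fun n => cle_of_add_eq_add (hx n) ((hy n).symm.trans (hy (n + 1)))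
  -- `(1 + ‖x₀‖)⁻¹` rather than `‖x₀‖⁻¹`, so that the case `x₀ = 0` needs no separate treatment.
  set a : ℝ≥0 := (1 + cnorm (x 0))⁻¹
  have ha : a ≠ 0 := inv_ne_zero (by positivity)
  obtain ⟨s, -, hs⟩ := hsc (fun n => a • y n) (fun n => cle_smul a (hy_mono n))
    (fun n => cnorm_inv_one_add_cnorm_smul_le_one (hy_le n))
  have hy_lub : IsLUBc (range y) (a⁻¹ • s) := by
    simpa [smul_smul, inv_mul_cancel₀ ha] using hs.range_smul (inv_ne_zero ha)
  obtain ⟨t, ht⟩ := hy_lub.2 (x 0) (by rintro _ ⟨n, rfl⟩; exact hy_le n)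
  exact ⟨t, isGLBc_range_of_isLUBc_complement hy hy_lub ht⟩
end

section
/- If a cone C is directed complete (every directed subset of the unit ball has a least upper bound in the unit ball), then every subset D of C that is directed for the reverse order has a greatest lower bound. -/
/-!
Fix `x ∈ D`. The differences `z` with `x = d + z`, `d ∈ D`, form a directed set (because `D` is
reverse-directed) lying in the ball of radius `‖x‖`, so after rescaling into the unit ball it has a
supremum `s`. Since `x` bounds these differences, `x = s + g` for some `g`, and cancellativity
turns "`s` is the least upper bound of `x - D`" into "`g = x - s` is the greatest lower bound
of `D`".
-/

open scoped Pointwise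

section

variable {C : Type*} [PCone C]

instance PCone.toIsLeftCancelAdd : IsLeftCancelAdd C :=
  ⟨fun a _ _ h => PCone.add_left_cancel' a _ _ h⟩

theorem cle_trans {x y w : C} : cle x y → cle y w → cle x w := by
  rintro ⟨u, rfl⟩ ⟨v, rfl⟩
  exact ⟨u + v, add_assoc x u v⟩

theorem cle_add_right {x y : C} (h : cle x y) (a : C) : cle (x + a) (y + a) := by
  obtain ⟨u, rfl⟩ := h
  exact ⟨u, add_right_comm x u a⟩

theorem cle_of_add_cle_add_left {a x y : C} (h : cle (a + x) (a + y)) : cle x y := by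
  obtain ⟨u, hu⟩ := h
  exact ⟨u, add_left_cancel (hu.trans (add_assoc a x u))⟩

theorem cle_of_add_eq_add {d e z w : C} (h : d + z = e + w) (hed : cle e d) : cle z w := by
  obtain ⟨u, rfl⟩ := hed
  rw [add_assoc, add_comm u z] at h
  exact ⟨u, (add_left_cancel h).symm⟩

theorem cle_smul (t : NNReal) {x y : C} (h : cle x y) : cle (t • x) (t • y) := by
  obtain ⟨u, rfl⟩ := h
  exact ⟨t • u, smul_add t x u⟩

theorem cle_of_smul_cle_smul {t : NNReal} (ht : t ≠ 0) {x y : C} (h : cle (t • x) (t • y)) :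
    cle x y := by
  simpa only [inv_smul_smul₀ ht] using cle_smul t⁻¹ h

theorem DirC.smul {S : Set C} (hS : DirC S) (t : NNReal) : DirC (t • S) := by
  refine ⟨hS.1.smul_set, ?_⟩
  rintro _ ⟨x, hx, rfl⟩ _ ⟨y, hy, rfl⟩
  obtain ⟨z, hz, hxz, hyz⟩ := hS.2 x hx y hy
  exact ⟨t • z, Set.smul_mem_smul_set hz, cle_smul t hxz, cle_smul t hyz⟩

theorem IsLUBc.of_smul {S : Set C} {t : NNReal} (ht : t ≠ 0) {s : C}
    (h : IsLUBc (t • S) (t • s)) : IsLUBc S s :=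
  ⟨fun z hz => cle_of_smul_cle_smul ht (h.1 _ (Set.smul_mem_smul_set hz)),
    fun b hb => cle_of_smul_cle_smul ht <| h.2 _ <| by
      rintro _ ⟨z, hz, rfl⟩
      exact cle_smul t (hb z hz)⟩

theorem exists_isLUBc_of_cnorm_le
    (hdc : ∀ D : Set C, (∀ x ∈ D, PCone.cnorm x ≤ 1) → DirC D →
      ∃ s : C, PCone.cnorm s ≤ 1 ∧ IsLUBc D s)
    {S : Set C} (hS : DirC S) {r : NNReal} (hr : ∀ z ∈ S, PCone.cnorm z ≤ r) :
    ∃ s, IsLUBc S s := by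
  set t : NNReal := (r + 1)⁻¹
  have hr1 : r + 1 ≠ 0 := (add_pos_of_nonneg_of_pos zero_le one_pos).ne'
  have ht : t ≠ 0 := inv_ne_zero hr1
  have hball : ∀ x ∈ t • S, PCone.cnorm x ≤ 1 := by
    rintro _ ⟨z, hz, rfl⟩
    calc PCone.cnorm (t • z) = t * PCone.cnorm z := PCone.cnorm_smul t z
      _ ≤ t * (r + 1) := mul_le_mul_right ((hr z hz).trans (le_add_of_nonneg_right zero_le)) t
      _ = 1 := inv_mul_cancel₀ hr1
  obtain ⟨s, -, hs⟩ := hdc _ hball (hS.smul t)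
  exact ⟨t⁻¹ • s, IsLUBc.of_smul ht (by rwa [smul_inv_smul₀ ht])⟩

def differences (x : C) (D : Set C) : Set C := {z | ∃ d ∈ D, x = d + z}

variable {x : C} {D : Set C}

theorem cle_of_mem_differences {z : C} (hz : z ∈ differences x D) : cle z x := by
  obtain ⟨d, -, rfl⟩ := hz
  exact ⟨d, add_comm d z⟩

theorem cnorm_le_of_mem_differences {z : C} (hz : z ∈ differences x D) :
    PCone.cnorm z ≤ PCone.cnorm x := by
  obtain ⟨d, -, rfl⟩ := hz
  simpa only [add_comm z d] using PCone.cnorm_le_add z d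

theorem RevDirC.dirC_differences (hD : RevDirC D) (hx : x ∈ D) : DirC (differences x D) := by
  refine ⟨⟨0, x, hx, (add_zero x).symm⟩, ?_⟩
  rintro z ⟨d, hd, hdz⟩ z' ⟨d', hd', hdz'⟩
  obtain ⟨e, he, hed, hed'⟩ := hD.2 d hd d' hd'
  obtain ⟨w, hw⟩ := cle_trans hed (⟨z, hdz⟩ : cle d x)
  exact ⟨w, ⟨e, he, hw⟩, cle_of_add_eq_add (hdz.symm.trans hw) hed,
    cle_of_add_eq_add (hdz'.symm.trans hw) hed'⟩

theorem RevDirC.isGLBc_of_isLUBc_differences (hD : RevDirC D) (hx : x ∈ D) {s g : C}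
    (hs : IsLUBc (differences x D) s) (hg : x = s + g) : IsGLBc D g := by
  constructor
  · intro d hd
    obtain ⟨e, he, ⟨u, hu⟩, hed⟩ := hD.2 x hx d hd
    have hus : cle (u + g) (u + e) := by
      simpa only [add_comm u e, ← hu, hg] using cle_add_right (hs.1 u ⟨e, he, hu⟩) g
    exact cle_trans (cle_of_add_cle_add_left hus) hed
  · intro b hb
    obtain ⟨v, hv⟩ := hb x hx
    have hsv : cle s v := hs.2 v <| by
      rintro z ⟨d, hd, hdz⟩
      exact cle_of_add_eq_add (hdz.symm.trans hv) (hb d hd)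
    have hsb : cle (s + b) (s + g) := by
      simpa only [add_comm v b, ← hv, hg] using cle_add_right hsv b
    exact cle_of_add_cle_add_left hsb

end

/-- If a cone is directed complete (every directed subset of the unit ball has a
least upper bound in the unit ball), then every reverse-directed subset has a
greatest lower bound. -/
theorem directed_complete_has_infs {C : Type*} [PCone C]
    (hdc : ∀ D : Set C, (∀ x ∈ D, PCone.cnorm x ≤ 1) → DirC D →
      ∃ s : C, PCone.cnorm s ≤ 1 ∧ IsLUBc D s) :
    ∀ D : Set C, RevDirC D → ∃ g : C, IsGLBc D g := by
  intro D hD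
  obtain ⟨x, hx⟩ := hD.1
  obtain ⟨s, hs⟩ := exists_isLUBc_of_cnorm_le hdc (hD.dirC_differences hx)
    fun _ hz => cnorm_le_of_mem_differences hz
  obtain ⟨g, hg⟩ := hs.2 x fun _ hz => cle_of_mem_differences hz
  exact ⟨g, hD.isGLBc_of_isLUBc_differences hx hs hg⟩
end

section
/- In a lattice cone C, for every x ∈ C the set of partitions of x (finite multisets [u₁,…,uₙ] with x = u₁ + ⋯ + uₙ) is directed for the refinement order: any two partitions of x have a common refinement. -/
/-- `π₂` refines `π₁`: `π₂` is obtained by splitting each element of `π₁` into a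
partition of it, i.e. there is a multiset `A` of multisets whose elementwise sums
give `π₁` and whose total union is `π₂`. -/
def Refines {C : Type*} [PCone C] (π₁ π₂ : Multiset C) : Prop :=
  ∃ A : Multiset (Multiset C), A.map Multiset.sum = π₁ ∧ A.sum = π₂


/-! Riesz decomposition: if `a + b = c + d` and `j = a ⊔ c`, then `e = a + c - j`, `f = j - c`,
`g = j - a` and `k = a + b - j` satisfy `a = e + f`, `c = e + g`, `b = g + k`, `d = f + k`; all four
differences exist because `j ≤ a + b = c + d` and `j ≤ a + c`. Iterating it splits any partition of
`u + s` into a partition of `u` and one of `s`, and induction on the first partition, with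
transitivity of refinement, yields a common refinement. Positivity of the cone enters only
through partitions of `0`, whose members all vanish. -/

theorem Multiset.exists_eq_add_of_map_eq_add {α β : Type*} {f : α → β} :
    ∀ {s t : Multiset β} {B : Multiset α}, B.map f = s + t →
      ∃ B₁ B₂, B = B₁ + B₂ ∧ B₁.map f = s ∧ B₂.map f = t := by
  classical
  intro s
  induction s using Multiset.induction_on with
  | empty => exact fun h => ⟨0, _, (zero_add _).symm, Multiset.map_zero f, by rwa [zero_add] at h⟩
  | cons b s ih =>
    intro t B h
    rw [Multiset.cons_add] at h
    obtain ⟨a, ha, rfl, hrest⟩ := (Multiset.map_eq_cons _ _ _ _).2 h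
    obtain ⟨B₁, B₂, hB, rfl, rfl⟩ := ih hrest
    refine ⟨a ::ₘ B₁, B₂, ?_, by simp, rfl⟩
    rw [Multiset.cons_add, ← hB, Multiset.cons_erase ha]

namespace Refines

variable {C : Type*} [PCone C]

theorem sum_eq {π π' : Multiset C} (h : Refines π π') : π'.sum = π.sum := by
  obtain ⟨A, rfl, rfl⟩ := h
  exact Multiset.sum_join

theorem refl (π : Multiset C) : Refines π π :=
  ⟨π.map ({·}), by simp [Multiset.map_map], Multiset.sum_map_singleton π⟩

theorem singleton_of_sum_eq {u : C} {π : Multiset C} (h : π.sum = u) : Refines {u} π :=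
  ⟨{π}, by simp [h], Multiset.sum_singleton π⟩

theorem add {π₁ π₁' π₂ π₂' : Multiset C} (h₁ : Refines π₁ π₁') (h₂ : Refines π₂ π₂') :
    Refines (π₁ + π₂) (π₁' + π₂') := by
  obtain ⟨A₁, rfl, rfl⟩ := h₁
  obtain ⟨A₂, rfl, rfl⟩ := h₂
  exact ⟨A₁ + A₂, Multiset.map_add _ _ _, Multiset.sum_add _ _⟩

theorem trans {π₁ π₂ π₃ : Multiset C} (h₁₂ : Refines π₁ π₂) (h₂₃ : Refines π₂ π₃) :
    Refines π₁ π₃ := by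
  obtain ⟨A, rfl, rfl⟩ := h₁₂
  obtain ⟨B, hB, rfl⟩ := h₂₃
  induction A using Multiset.induction_on generalizing B with
  | empty => exact ⟨0, rfl, by simp_all⟩
  | cons α A ih =>
    rw [Multiset.sum_cons] at hB
    obtain ⟨B₁, B₂, rfl, hB₁, hB₂⟩ := Multiset.exists_eq_add_of_map_eq_add hB
    rw [Multiset.map_cons, ← Multiset.singleton_add, Multiset.sum_add]
    exact (singleton_of_sum_eq (by rw [← hB₁]; exact Multiset.sum_join)).add (ih B₂ hB₂)

theorem map_add_fst_snd (ρ : Multiset (C × C)) :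
    Refines (ρ.map fun p => p.1 + p.2) (ρ.map Prod.fst + ρ.map Prod.snd) := by
  refine ⟨ρ.map fun p => {p.1} + {p.2}, by simp [Multiset.map_map], ?_⟩
  rw [Multiset.sum_map_add]
  congr 1 <;> simpa [Multiset.map_map] using Multiset.sum_map_singleton (ρ.map _)

end Refines

namespace PCone

variable {C : Type*} [PCone C]

instance inst_s7 : IsLeftCancelAdd C := ⟨fun x _ _ => PCone.add_left_cancel' x _ _⟩

theorem cnorm_zero : cnorm (0 : C) = 0 := by
  simpa using cnorm_smul (0 : NNReal) (0 : C)

theorem eq_zero_of_add_eq_zero {x y : C} (h : x + y = 0) : x = 0 :=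
  cnorm_eq_zero x <| le_antisymm (by simpa [h, cnorm_zero] using cnorm_le_add x y) zero_le

theorem eq_zero_of_mem_of_sum_eq_zero {π : Multiset C} (h : π.sum = 0) {u : C} (hu : u ∈ π) :
    u = 0 := by
  obtain ⟨t, rfl⟩ := Multiset.exists_cons_of_mem hu
  rw [Multiset.sum_cons] at h
  exact eq_zero_of_add_eq_zero h

theorem refines_zero_of_sum_eq_zero {π : Multiset C} (h : π.sum = 0) : Refines π 0 := by
  refine ⟨π.map fun _ => 0, ?_, by simp⟩
  rw [Multiset.map_map]
  conv_rhs => rw [← Multiset.map_id π]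
  exact Multiset.map_congr rfl fun u hu => by simp [eq_zero_of_mem_of_sum_eq_zero h hu]

theorem isUBc_pair_iff {x y b : C} : IsUBc {x, y} b ↔ cle x b ∧ cle y b := by
  simp [IsUBc]

theorem exists_riesz_decomposition (hlat : ∀ x y : C, ∃ j : C, IsLUBc {x, y} j) {a b c d : C}
    (h : a + b = c + d) : ∃ e f g k : C, a = e + f ∧ c = e + g ∧ b = g + k ∧ d = f + k := by
  obtain ⟨j, hj_ub, hj_least⟩ := hlat a c
  obtain ⟨⟨g, rfl⟩, ⟨f, hf⟩⟩ := isUBc_pair_iff.1 hj_ub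
  obtain ⟨k, hk⟩ := hj_least (a + b) (isUBc_pair_iff.2 ⟨⟨b, rfl⟩, ⟨d, h⟩⟩)
  obtain ⟨e, he⟩ := hj_least (a + c) (isUBc_pair_iff.2 ⟨⟨c, rfl⟩, ⟨a, add_comm a c⟩⟩)
  refine ⟨e, f, g, k, add_left_cancel (a := c) ?_, add_left_cancel (a := a) ?_,
    add_left_cancel (a := a) ?_, add_left_cancel (a := c) ?_⟩
  · rw [add_comm c a, he, hf]; abel
  · rw [he]; abel
  · rw [hk, add_assoc]
  · rw [← h, hk, hf, add_assoc]

theorem exists_split_of_add_eq_sum (hlat : ∀ x y : C, ∃ j : C, IsLUBc {x, y} j) :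
    ∀ {π : Multiset C} {u s : C}, u + s = π.sum →
      ∃ ρ : Multiset (C × C), ρ.map (fun p => p.1 + p.2) = π ∧
        (ρ.map Prod.fst).sum = u ∧ (ρ.map Prod.snd).sum = s := by
  intro π
  induction π using Multiset.induction_on with
  | empty =>
    intro u s h
    rw [Multiset.sum_zero] at h
    refine ⟨0, rfl, ?_, ?_⟩
    · simp [eq_zero_of_add_eq_zero h]
    · simp [eq_zero_of_add_eq_zero ((add_comm s u).trans h)]
  | cons v π ih =>
    intro u s h
    rw [Multiset.sum_cons] at h
    obtain ⟨e, f, g, k, rfl, rfl, rfl, hπ⟩ := exists_riesz_decomposition hlat h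
    obtain ⟨ρ, hρ, hfst, hsnd⟩ := ih hπ.symm
    exact ⟨(e, g) ::ₘ ρ, by simp [hρ], by simp [hfst], by simp [hsnd]⟩

theorem exists_common_refinement (hlat : ∀ x y : C, ∃ j : C, IsLUBc {x, y} j) :
    ∀ {π₁ π₂ : Multiset C}, π₁.sum = π₂.sum → ∃ π, Refines π₁ π ∧ Refines π₂ π := by
  intro π₁
  induction π₁ using Multiset.induction_on with
  | empty => exact fun h => ⟨0, Refines.refl 0, refines_zero_of_sum_eq_zero h.symm⟩
  | cons a t ih =>
    intro π₂ h
    rw [Multiset.sum_cons] at h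
    obtain ⟨ρ, rfl, hfst, hsnd⟩ := exists_split_of_add_eq_sum hlat h
    obtain ⟨π, htπ, hsndπ⟩ := ih hsnd.symm
    refine ⟨ρ.map Prod.fst + π, ?_, (Refines.map_add_fst_snd ρ).trans ((Refines.refl _).add hsndπ)⟩
    rw [← Multiset.singleton_add]
    exact (Refines.singleton_of_sum_eq hfst).add htπ

end PCone

/-- In a lattice cone, the partitions of any element `x` (finite multisets summing
to `x`) are directed for the refinement order: any two partitions of `x` have a
common refinement. -/
theorem partitions_directed {C : Type*} [PCone C]
    (hlat : ∀ x y : C, ∃ j : C, IsLUBc {x, y} j) :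
    ∀ (x : C) (π₁ π₂ : Multiset C), π₁.sum = x → π₂.sum = x →
      ∃ π : Multiset C, π.sum = x ∧ Refines π₁ π ∧ Refines π₂ π := by
  intro x π₁ π₂ h₁ h₂
  obtain ⟨π, h₁π, h₂π⟩ := PCone.exists_common_refinement hlat (h₁.trans h₂.symm)
  exact ⟨π, h₁π.sum_eq.trans h₁, h₁π, h₂π⟩
end

section
/- For every probabilistic coherence space X, the cone F(X) associated to X is a directed-complete lattice cone: every directed subset of the unit ball has a supremum in the unit ball, and any two elements have a least upper bound given by the pointwise maximum. -/
open scoped ENNReal NNReal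

/-- The dual of a set of `ℝ≥0`-valued vectors on a web `A`:
`P⊥ = {u : ∀ v ∈ P, Σₐ uₐ vₐ ≤ 1}`. -/
def dualSet {A : Type*} (P : Set (A → ℝ≥0)) : Set (A → ℝ≥0) :=
  {u | ∀ v ∈ P, (∑' a : A, (u a : ℝ≥0∞) * (v a : ℝ≥0∞)) ≤ 1}

/-- A probabilistic coherence space on a countable web `A`. -/
structure PCS (A : Type*) [Countable A] where
  P : Set (A → ℝ≥0)
  bidual : dualSet (dualSet P) = P
  cover : ∀ a : A, ∃ u ∈ P, 0 < u a ∧ ∀ b : A, b ≠ a → u b = 0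
  bdd : ∀ a : A, ∃ M : ℝ≥0, ∀ u ∈ P, u a ≤ M

/-- The cone associated to a PCS: all non-negative multiples of cliques. -/
def coneSet {A : Type*} [Countable A] (X : PCS A) : Set (A → ℝ≥0) :=
  {w | ∃ (α : ℝ≥0) (x : A → ℝ≥0), x ∈ X.P ∧ w = α • x}

/-- The norm of the cone associated to a PCS: `‖w‖ = inf {1/r : r • w ∈ P(X), r > 0}`. -/
noncomputable def cnormP {A : Type*} [Countable A] (X : PCS A) (w : A → ℝ≥0) : ℝ≥0∞ :=
  sInf {q : ℝ≥0∞ | ∃ r : ℝ≥0, 0 < r ∧ r • w ∈ X.P ∧ q = (r : ℝ≥0∞)⁻¹}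

/-- The cone order on the cone of a PCS: `x ≤ y` iff `y = x + z` for some `z` in the cone. -/
def cleP {A : Type*} [Countable A] (X : PCS A) (x y : A → ℝ≥0) : Prop :=
  ∃ z ∈ coneSet X, y = x + z

/-- `b` is an upper bound for `s` in the cone order of the PCS `X`. -/
def IsUBp {A : Type*} [Countable A] (X : PCS A) (s : Set (A → ℝ≥0)) (b : A → ℝ≥0) : Prop :=
  ∀ w ∈ s, cleP X w b

/-- `j` is a least upper bound for `s` in the cone order of the PCS `X`. -/
def IsLUBp {A : Type*} [Countable A] (X : PCS A) (s : Set (A → ℝ≥0)) (j : A → ℝ≥0) : Prop :=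
  IsUBp X s j ∧ ∀ b, IsUBp X s b → cleP X j b

/-
Everything reduces to the pointwise order. A vector `u` lies in a dual set `P⊥` as soon as
its pairings with `P` are bounded by `1`, and such bounds survive passing to smaller vectors,
to midpoints and, by monotone convergence, to pointwise suprema of directed families. Since
`P(X) = P(X)⊥⊥` is itself a dual set, the unit ball is downward closed and closed under
bounded directed suprema (every coordinate is bounded on `P(X)`), and the cone is downward
closed and closed under addition. In particular the cone order is the pointwise order on the
cone, so a pointwise least upper bound lying in the cone is a least upper bound in the cone
order: this gives the directed suprema and the pointwise maxima.
-/

theorem ENNReal.tsum_iSup_of_directed {ι α : Type*} {f : ι → α → ℝ≥0∞}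
    (hf : Directed (· ≤ ·) f) : ∑' a, ⨆ i, f i a = ⨆ i, ∑' a, f i a := by
  refine le_antisymm ?_ (iSup_le fun i => ENNReal.tsum_le_tsum fun a => le_iSup (f · a) i)
  rw [ENNReal.tsum_eq_iSup_sum]
  refine iSup_le fun F => ?_
  rw [ENNReal.finsetSum_iSup fun i j => (hf i j).imp fun k hk a => ⟨hk.1 a, hk.2 a⟩]
  exact iSup_mono fun i => ENNReal.sum_le_tsum F

section dualSet

variable {A : Type*} {P : Set (A → ℝ≥0)}

theorem mem_dualSet_of_le {u u' : A → ℝ≥0} (hu : u ∈ dualSet P) (h : u' ≤ u) :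
    u' ∈ dualSet P := fun v hv =>
  (ENNReal.tsum_le_tsum fun a => by gcongr; exact h a).trans (hu v hv)

theorem inv_two_smul_add_mem_dualSet {u u' : A → ℝ≥0} (hu : u ∈ dualSet P)
    (hu' : u' ∈ dualSet P) : (2⁻¹ : ℝ≥0) • (u + u') ∈ dualSet P := by
  intro v hv
  calc ∑' a, (((2⁻¹ : ℝ≥0) • (u + u')) a : ℝ≥0∞) * v a
      = 2⁻¹ * (∑' a, (u a : ℝ≥0∞) * v a + ∑' a, (u' a : ℝ≥0∞) * v a) := by
        rw [← ENNReal.tsum_add, ← ENNReal.tsum_mul_left]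
        congr with a
        simp only [Pi.smul_apply, Pi.add_apply, smul_eq_mul]
        push_cast
        ring
    _ ≤ 2⁻¹ * (1 + 1) := by gcongr; exacts [hu v hv, hu' v hv]
    _ = 1 := by rw [one_add_one_eq_two, ENNReal.inv_mul_cancel two_ne_zero ENNReal.ofNat_ne_top]

theorem sSup_mem_dualSet {D : Set (A → ℝ≥0)} (hD : D ⊆ dualSet P)
    (hdir : DirectedOn (· ≤ ·) D) (hbdd : BddAbove D) : sSup D ∈ dualSet P := by
  intro v hv
  obtain ⟨b, hb⟩ := hbdd
  have hcoord : ∀ a, BddAbove (Set.range fun w : D => (w : A → ℝ≥0) a) := fun a =>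
    ⟨b a, by rintro _ ⟨w, rfl⟩; exact hb w.2 a⟩
  calc ∑' a, (sSup D a : ℝ≥0∞) * v a
      = ∑' a, ⨆ w : D, ((w : A → ℝ≥0) a : ℝ≥0∞) * v a := by
        congr with a
        rw [sSup_apply, ENNReal.coe_iSup (hcoord a), ENNReal.iSup_mul]
    _ = ⨆ w : D, ∑' a, ((w : A → ℝ≥0) a : ℝ≥0∞) * v a := by
        refine ENNReal.tsum_iSup_of_directed fun w w' => ?_
        obtain ⟨z, hz, hwz, hw'z⟩ := hdir w w.2 w' w'.2
        exact ⟨⟨z, hz⟩, fun a => mul_le_mul_left (ENNReal.coe_le_coe.2 (hwz a)) _,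
          fun a => mul_le_mul_left (ENNReal.coe_le_coe.2 (hw'z a)) _⟩
    _ ≤ 1 := iSup_le fun w => hD w.2 v hv

end dualSet

namespace PCS

variable {A : Type*} [Countable A] (X : PCS A)

theorem mem_of_le {u u' : A → ℝ≥0} (hu : u ∈ X.P) (h : u' ≤ u) : u' ∈ X.P := by
  rw [← X.bidual] at hu ⊢
  exact mem_dualSet_of_le hu h

theorem inv_two_smul_add_mem {u u' : A → ℝ≥0} (hu : u ∈ X.P) (hu' : u' ∈ X.P) :
    (2⁻¹ : ℝ≥0) • (u + u') ∈ X.P := by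
  rw [← X.bidual] at hu hu' ⊢
  exact inv_two_smul_add_mem_dualSet hu hu'

theorem bddAbove {D : Set (A → ℝ≥0)} (hD : D ⊆ X.P) : BddAbove D := by
  choose M hM using X.bdd
  exact ⟨M, fun w hw a => hM a w (hD hw)⟩

theorem sSup_mem {D : Set (A → ℝ≥0)} (hD : D ⊆ X.P) (hdir : DirectedOn (· ≤ ·) D) :
    sSup D ∈ X.P := by
  have hbdd := X.bddAbove hD
  rw [← X.bidual] at hD ⊢
  exact sSup_mem_dualSet hD hdir hbdd

theorem P_subset_coneSet : X.P ⊆ coneSet X := fun x hx => ⟨1, x, hx, (one_smul _ _).symm⟩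

end PCS

section cone

variable {A : Type*} [Countable A] (X : PCS A)

theorem mem_coneSet_of_le {w w' : A → ℝ≥0} (hw : w ∈ coneSet X) (h : w' ≤ w) :
    w' ∈ coneSet X := by
  obtain ⟨α, x, hx, rfl⟩ := hw
  rcases eq_or_ne α 0 with rfl | hα
  · obtain rfl : w' = 0 := le_antisymm (by simpa using h) bot_le
    exact ⟨0, x, hx, (zero_smul _ _).symm⟩
  · refine ⟨α, α⁻¹ • w', X.mem_of_le hx ?_, (smul_inv_smul₀ hα w').symm⟩
    exact (inv_smul_le_iff_of_pos (pos_iff_ne_zero.2 hα)).2 h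

theorem add_mem_coneSet {w w' : A → ℝ≥0} (hw : w ∈ coneSet X) (hw' : w' ∈ coneSet X) :
    w + w' ∈ coneSet X := by
  obtain ⟨α, x, hx, rfl⟩ := hw
  obtain ⟨β, y, hy, rfl⟩ := hw'
  have hsum : ((α + β) * 2) • ((2⁻¹ : ℝ≥0) • (x + y)) = (α + β) • (x + y) := by
    rw [smul_smul, mul_assoc, mul_inv_cancel₀ two_ne_zero, mul_one]
  refine mem_coneSet_of_le X ⟨_, _, X.inv_two_smul_add_mem hx hy, hsum.symm⟩ fun a => ?_
  simp only [Pi.add_apply, Pi.smul_apply, smul_eq_mul]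
  calc α * x a + β * y a ≤ (α + β) * x a + (α + β) * y a := by
        gcongr
        exacts [le_self_add, le_add_self]
    _ = (α + β) * (x a + y a) := (mul_add _ _ _).symm

theorem sup_mem_coneSet {x y : A → ℝ≥0} (hx : x ∈ coneSet X) (hy : y ∈ coneSet X) :
    x ⊔ y ∈ coneSet X :=
  mem_coneSet_of_le X (add_mem_coneSet X hx hy) (sup_le le_self_add le_add_self)

theorem cleP.le {x y : A → ℝ≥0} (h : cleP X x y) : x ≤ y := by
  obtain ⟨z, -, rfl⟩ := h
  exact le_self_add

theorem cleP_of_le {x y : A → ℝ≥0} (hy : y ∈ coneSet X) (h : x ≤ y) : cleP X x y :=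
  ⟨y - x, mem_coneSet_of_le X hy tsub_le_self, (add_tsub_cancel_of_le h).symm⟩

theorem mem_coneSet_of_cleP {x y : A → ℝ≥0} (hx : x ∈ coneSet X) (h : cleP X x y) :
    y ∈ coneSet X := by
  obtain ⟨z, hz, rfl⟩ := h
  exact add_mem_coneSet X hx hz

theorem isLUBp_of_isLUB {D : Set (A → ℝ≥0)} {s : A → ℝ≥0} (hD : D ⊆ coneSet X)
    (hne : D.Nonempty) (hs : s ∈ coneSet X) (h : IsLUB D s) : IsLUBp X D s := by
  refine ⟨fun w hw => cleP_of_le X hs (h.1 hw), fun b hb => ?_⟩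
  obtain ⟨w, hw⟩ := hne
  exact cleP_of_le X (mem_coneSet_of_cleP X (hD hw) (hb w hw))
    (h.2 fun w' hw' => (hb w' hw').le)

end cone

/-- The cone of a PCS is a directed-complete lattice cone: every directed subset of
the unit ball `P(X)` has a supremum in `P(X)`, and any two elements of the cone have
a least upper bound given by the pointwise maximum. -/
theorem pcs_cone_directed_complete_lattice {A : Type*} [Countable A] (X : PCS A) :
    (∀ D : Set (A → ℝ≥0), D ⊆ X.P → D.Nonempty →
      (∀ x ∈ D, ∀ y ∈ D, ∃ z ∈ D, cleP X x z ∧ cleP X y z) →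
      ∃ s ∈ X.P, IsLUBp X D s) ∧
    (∀ x ∈ coneSet X, ∀ y ∈ coneSet X,
      (fun a => max (x a) (y a)) ∈ coneSet X ∧
      IsLUBp X {x, y} (fun a => max (x a) (y a))) := by
  refine ⟨fun D hDP hne hdir => ?_, fun x hx y hy => ?_⟩
  · have hdir_le : DirectedOn (· ≤ ·) D := fun x hx y hy =>
      (hdir x hx y hy).imp fun _ ⟨hz, hxz, hyz⟩ => ⟨hz, hxz.le, hyz.le⟩
    have hsP : sSup D ∈ X.P := X.sSup_mem hDP hdir_le
    exact ⟨sSup D, hsP, isLUBp_of_isLUB X (hDP.trans X.P_subset_coneSet) hne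
      (X.P_subset_coneSet hsP) (isLUB_csSup hne (X.bddAbove hDP))⟩
  · have hxy : x ⊔ y ∈ coneSet X := sup_mem_coneSet X hx hy
    exact ⟨hxy, isLUBp_of_isLUB X (Set.insert_subset hx (Set.singleton_subset_iff.2 hy))
      (Set.insert_nonempty x {y}) hxy isLUB_pair⟩
end

section
/- Let X, Y be probabilistic coherence spaces and f ∈ ℝ≥0^{Mfin(|X|) × |Y|} a matrix indexed by finite multisets over |X| and elements of |Y|, such that for all x ∈ P(X), the vector (f·x!)_b = Σ_μ f_{μ,b}·x^μ lies in P(Y). Then the induced map x ↦ f·x! from P(X) to P(Y) is pre-stable: for every n, every x and u₁,…,uₙ with x + Σuᵢ ∈ P(X), the alternating sum Σ_{I ⊆ {1..n}} (−1)^{n−|I|} f·(x + Σ_{i∈I} uᵢ)! is non-negative in every coordinate. -/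
open scoped ENNReal NNReal

/-- The application of a matrix `f ∈ ℝ≥0^{Mfin(A) × B}` to the promotion `x!` of
`x : A → ℝ≥0`:  `(f · x!)_b = Σ_μ f_{μ,b} · x^μ` where `x^μ = ∏_{a ∈ μ} x_a`. -/
noncomputable def appF {A B : Type*} (f : Multiset A → B → ℝ≥0)
    (x : A → ℝ≥0) (b : B) : ℝ≥0∞ :=
  ∑' μ : Multiset A, (f μ b : ℝ≥0∞) * (((μ.map x).prod : ℝ≥0) : ℝ≥0∞)

/-!
Each coordinate of `x ↦ f · x!` is a series `Σ_μ f_{μ,b} x^μ` with non-negative coefficients,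
so it suffices to treat one monomial `I ↦ (x + Σ_{i ∈ I} uᵢ)^μ`. Expanding the product, this
function of `I ⊆ {1, …, n}` is a non-negative combination of indicators `[S ⊆ I]`, and for a
single indicator the alternating sum is the number of supersets of `S` of even codimension minus
those of odd codimension: `1` if `S` is everything, `0` otherwise.
-/

open Finset

section UpperIndicators

variable (R : Type*) [CommSemiring R] (ι : Type*) [Fintype ι] [DecidableEq ι]

/-- Combinations of indicators of principal up-sets; closed under products because
`[S ⊆ I] [T ⊆ I] = [S ∪ T ⊆ I]`. -/
def upperIndicatorCombs : Subsemiring (Finset ι → R) where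
  carrier := {h | ∃ c : Finset ι → R, ∀ I, h I = ∑ S, if S ⊆ I then c S else 0}
  zero_mem' := ⟨0, by simp⟩
  add_mem' := by
    rintro h₁ h₂ ⟨c₁, hc₁⟩ ⟨c₂, hc₂⟩
    refine ⟨c₁ + c₂, fun I => ?_⟩
    simp only [Pi.add_apply, hc₁, hc₂, ← sum_add_distrib, ite_add_zero]
  one_mem' := ⟨Pi.single ∅ 1, fun I => by
    rw [Fintype.sum_eq_single ∅ fun S hS => by simp [hS]]; simp⟩
  mul_mem' := by
    rintro h₁ h₂ ⟨c₁, hc₁⟩ ⟨c₂, hc₂⟩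
    refine ⟨fun W => ∑ p : Finset ι × Finset ι with p.1 ∪ p.2 = W, c₁ p.1 * c₂ p.2,
      fun I => ?_⟩
    calc (h₁ * h₂) I
        = ∑ p : Finset ι × Finset ι, if p.1 ∪ p.2 ⊆ I then c₁ p.1 * c₂ p.2 else 0 := by
          rw [Pi.mul_apply, hc₁, hc₂, sum_mul_sum, ← sum_product', univ_product_univ]
          simp only [ite_zero_mul_ite_zero, union_subset_iff]
      _ = ∑ W, ∑ p : Finset ι × Finset ι with p.1 ∪ p.2 = W,
            if p.1 ∪ p.2 ⊆ I then c₁ p.1 * c₂ p.2 else 0 :=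
          (sum_fiberwise _ _ _).symm
      _ = _ := by
          refine sum_congr rfl fun W _ => ?_
          split_ifs with hW
          · exact sum_congr rfl fun p hp => if_pos ((mem_filter.mp hp).2 ▸ hW)
          · exact sum_eq_zero fun p hp => if_neg ((mem_filter.mp hp).2 ▸ hW)

variable {R ι}

theorem upperIndicator_mem_upperIndicatorCombs (S : Finset ι) (r : R) :
    (fun I => if S ⊆ I then r else 0) ∈ upperIndicatorCombs R ι :=
  ⟨Pi.single S r, fun I => by
    rw [Fintype.sum_eq_single S fun T hT => by simp [hT]]; simp⟩

theorem prod_map_add_sum_mem_upperIndicatorCombs {A : Type*} (x : A → R) (u : ι → A → R)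
    (μ : Multiset A) :
    (fun I => (μ.map fun a => x a + ∑ i ∈ I, u i a).prod) ∈ upperIndicatorCombs R ι := by
  induction μ using Multiset.induction with
  | empty => exact (upperIndicatorCombs R ι).one_mem
  | cons a μ ih =>
    simp only [Multiset.map_cons, Multiset.prod_cons]
    refine (upperIndicatorCombs R ι).mul_mem ?_ ih
    have hx := upperIndicator_mem_upperIndicatorCombs (∅ : Finset ι) (x a)
    have hu := (upperIndicatorCombs R ι).sum_mem fun i (_ : i ∈ univ) =>
      upperIndicator_mem_upperIndicatorCombs {i} (u i a)
    convert (upperIndicatorCombs R ι).add_mem hx hu using 1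
    ext I
    simp [sum_ite_mem]

end UpperIndicators

section Parity

variable {ι : Type*} [Fintype ι] [DecidableEq ι]

/-- Toggling a point outside `S` pairs the odd-codimensional supersets of `S` with even ones;
only for `S = univ` is there an unpaired one, and it is even. -/
theorem card_odd_supersets_le_card_even_supersets (S : Finset ι) :
    #{I | Iᶜ.card % 2 = 1 ∧ S ⊆ I} ≤ #{I | Iᶜ.card % 2 = 0 ∧ S ⊆ I} := by
  by_cases hS : S = univ
  · subst hS
    refine (card_eq_zero.mpr (filter_eq_empty_iff.mpr ?_)).trans_le (Nat.zero_le _)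
    rintro I - ⟨hodd, hI⟩
    simp [univ_subset_iff.mp hI] at hodd
  obtain ⟨i₀, hi₀⟩ : ∃ i, i ∉ S := by simpa [eq_univ_iff_forall] using hS
  let toggle : Finset ι → Finset ι := fun I => if i₀ ∈ I then I.erase i₀ else insert i₀ I
  have toggle_toggle : ∀ I, toggle (toggle I) = I := fun I => by
    by_cases h : i₀ ∈ I <;> simp [toggle, h, insert_erase]
  refine card_le_card_of_injOn toggle (fun I hI => ?_) fun I _ J _ hIJ => ?_
  · simp only [coe_filter, mem_univ, true_and, Set.mem_ofPred_eq] at hI ⊢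
    by_cases h : i₀ ∈ I
    · have hi₀I : i₀ ∉ Iᶜ := by simpa using h
      simp only [toggle, h, if_true]
      rw [compl_erase, card_insert_of_notMem hi₀I]
      exact ⟨by omega, subset_erase.mpr ⟨hI.2, hi₀⟩⟩
    · have hi₀I : i₀ ∈ Iᶜ := by simpa using h
      have : 0 < Iᶜ.card := card_pos.mpr ⟨i₀, hi₀I⟩
      simp only [toggle, h, if_false]
      rw [compl_insert, card_erase_of_mem hi₀I]
      exact ⟨by omega, hI.2.trans (subset_insert _ _)⟩
  · simpa [toggle_toggle] using congrArg toggle hIJ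

variable {R : Type*} [CommSemiring R] [PartialOrder R] [CanonicallyOrderedAdd R]
  [IsOrderedAddMonoid R]

theorem sum_odd_le_sum_even_of_mem_upperIndicatorCombs {h : Finset ι → R}
    (hh : h ∈ upperIndicatorCombs R ι) :
    ∑ I with Iᶜ.card % 2 = 1, h I ≤ ∑ I with Iᶜ.card % 2 = 0, h I := by
  obtain ⟨c, hc⟩ := hh
  have sum_eq (q : Finset ι → Prop) [DecidablePred q] :
      ∑ I with q I, h I = ∑ S, #{I | q I ∧ S ⊆ I} • c S := by
    simp only [hc]
    rw [sum_comm]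
    refine sum_congr rfl fun S _ => ?_
    rw [← sum_filter, filter_filter, sum_const]
  rw [sum_eq, sum_eq]
  exact sum_le_sum fun S _ =>
    nsmul_le_nsmul_left zero_le (card_odd_supersets_le_card_even_supersets S)

end Parity

theorem pcoh_morphism_prestable_general {A B : Type*} [Countable A]
    (X : PCS A) (f : Multiset A → B → ℝ≥0) :
    ∀ (n : ℕ) (x : A → ℝ≥0) (u : Fin n → A → ℝ≥0),
      (x + ∑ i : Fin n, u i) ∈ X.P → ∀ b : B,
      ∑ I ∈ Finset.univ.filter (fun I : Finset (Fin n) => (n - I.card) % 2 = 1),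
          appF f (x + ∑ i ∈ I, u i) b ≤
      ∑ I ∈ Finset.univ.filter (fun I : Finset (Fin n) => (n - I.card) % 2 = 0),
          appF f (x + ∑ i ∈ I, u i) b := by
  intro n x u _ b
  have monomial_le (μ : Multiset A) := sum_odd_le_sum_even_of_mem_upperIndicatorCombs
    (prod_map_add_sum_mem_upperIndicatorCombs x u μ)
  simp only [card_compl, Fintype.card_fin] at monomial_le
  simp only [appF, ← Summable.tsum_finsetSum fun _ _ => ENNReal.summable]
  refine ENNReal.tsum_le_tsum fun μ => ?_
  simp only [← mul_sum, Pi.add_apply, Finset.sum_apply]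
  refine mul_le_mul_right ?_ _
  exact_mod_cast monomial_le μ

/-- If a matrix `f` indexed by finite multisets over `|X|` and elements of `|Y|`
sends every clique `x ∈ P(X)` to a clique `f · x! ∈ P(Y)`, then the induced map is
pre-stable: all alternating higher-order differences are non-negative, i.e. the odd
part is dominated by the even part. -/
theorem pcoh_morphism_prestable {A B : Type*} [Countable A] [Countable B]
    (X : PCS A) (Y : PCS B) (f : Multiset A → B → ℝ≥0)
    (hf : ∀ x ∈ X.P, ∃ y ∈ Y.P, ∀ b : B, appF f x b = (y b : ℝ≥0∞)) :
    ∀ (n : ℕ) (x : A → ℝ≥0) (u : Fin n → A → ℝ≥0),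
      (x + ∑ i : Fin n, u i) ∈ X.P → ∀ b : B,
      ∑ I ∈ Finset.univ.filter (fun I : Finset (Fin n) => (n - I.card) % 2 = 1),
          appF f (x + ∑ i ∈ I, u i) b ≤
      ∑ I ∈ Finset.univ.filter (fun I : Finset (Fin n) => (n - I.card) % 2 = 0),
          appF f (x + ∑ i ∈ I, u i) b :=
  pcoh_morphism_prestable_general X f
end
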